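/- Let K ∈ 𝒦 with associated sequence Λ_j = Σ_{l>j} α_l, where α_l = 2^{-l}(k_{-l} − k_{-l+1}). Then every Haar function is an eigenfunction of the operator Tf(x) = ∫_{ℝ⁺} K(x,y) f(y) dy: for each h ∈ ℋ with supporting interval I(h) ∈ 𝒟^{j(h)}, one has Th(x) = Λ_{j(h)} h(x) for every x ∈ ℝ⁺. -/

import Mathlib

open MeasureTheory Set Filter
open scoped ENNReal

/-- The dyadic distance on ℝ⁺: the infimum of the lengths of the dyadic
intervals `[k·2^{-j}, (k+1)·2^{-j})` containing both points (and `0` on the diagonal). -/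
noncomputable def dyadicDist (x y : ℝ) : ℝ :=
  if x = y then 0
  else sInf {r : ℝ | ∃ (j : ℤ) (k : ℕ), r = (2:ℝ) ^ (-j) ∧
    x ∈ Set.Ico ((k : ℝ) * (2:ℝ) ^ (-j)) (((k : ℝ) + 1) * (2:ℝ) ^ (-j)) ∧
    y ∈ Set.Ico ((k : ℝ) * (2:ℝ) ^ (-j)) (((k : ℝ) + 1) * (2:ℝ) ^ (-j))}

/-- The sequence `α_l = 2^{-l}(k_{-l} - k_{-l+1})` associated to the level values `k` of a
kernel in `𝒦`. -/
noncomputable def alphaOf (k : ℤ → ℝ) (l : ℤ) : ℝ :=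
  (2:ℝ) ^ (-l) * (k (-l) - k (-l + 1))

/-- The profile `φ(s) = Σ_{l∈ℤ} α_l 2^l χ_{(0,2^{-l}]}(s)` associated to the level values `k`. -/
noncomputable def phiOf (k : ℤ → ℝ) (s : ℝ) : ℝ :=
  ∑' l : ℤ, alphaOf k l * ((2:ℝ) ^ l * (if s ∈ Set.Ioc (0:ℝ) ((2:ℝ) ^ (-l)) then 1 else 0))

/-- The sequence `Λ_j = Σ_{l>j} α_l` associated to the level values `k`. -/
noncomputable def LambdaOf (k : ℤ → ℝ) (j : ℤ) : ℝ :=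
  ∑' m : ℕ, alphaOf k (j + 1 + m)

/-- The Haar function `h^j_k(x) = 2^{j/2}(χ_{[0,1/2)} - χ_{[1/2,1)})(2^j x - k)`,
supported in the dyadic interval `I^j_k = [k·2^{-j},(k+1)·2^{-j})`. -/
noncomputable def haarFn (j : ℤ) (k : ℕ) (x : ℝ) : ℝ :=
  (2:ℝ) ^ ((j : ℝ) / 2) *
    (if (2:ℝ) ^ j * x - (k : ℝ) ∈ Set.Ico (0:ℝ) (1/2) then 1
     else if (2:ℝ) ^ j * x - (k : ℝ) ∈ Set.Ico (1/2 : ℝ) 1 then -1 else 0)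

/-!
For `x ≥ 0` the half-line, minus the point `x`, is the disjoint union over `l ∈ ℤ` of the shells
`{y : δ(x, y) = 2^{-l}}`, of measure `2^{-l-1}`, on which `K x` is the constant `k_{-l}`. The
profile `l ↦ 2^{-l-1} k_{-l}` does not depend on `x`, so `K x` is integrable as soon as `K x₀` is.

If `x ∉ I(h)`, then `I(h)` lies in a single shell around `x`, so `K x` is constant on `I(h)` and
`Th(x)` is a multiple of `∫ h = 0`. If `x ∈ I(h)`, then `h = h(x)` on the half of `I(h)` containing
`x`, which is the union of the shells with `l > j`, and `h = -h(x)` on the other half, which is the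
shell with `l = j`. Hence `Th(x) = h(x) (Σ_{l>j} 2^{-l-1} k_{-l} - 2^{-j-1} k_{-j})`, and summation
by parts turns the bracket into `Λ_j = Σ_{l>j} α_l`.
-/

lemma two_zpow_neg_add_one (a : ℤ) : (2:ℝ) ^ (-(a + 1)) = 2 ^ (-a) / 2 := by
  rw [neg_add, zpow_add₀ two_ne_zero, zpow_neg_one, div_eq_mul_inv]

lemma mem_Ico_zpow_iff_floor_eq (l m : ℤ) (y : ℝ) :
    y ∈ Ico ((m : ℝ) * 2 ^ (-l)) ((m + 1) * 2 ^ (-l)) ↔ ⌊(2:ℝ) ^ l * y⌋ = m := by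
  have hp : (0:ℝ) < 2 ^ l := by positivity
  rw [Int.floor_eq_iff, zpow_neg, ← div_eq_mul_inv, ← div_eq_mul_inv, mem_Ico,
    div_le_iff₀ hp, lt_div_iff₀ hp, mul_comm y]

lemma floor_two_zpow_mul_of_le {l' l : ℤ} (h : l' ≤ l) (y : ℝ) :
    ⌊(2:ℝ) ^ l' * y⌋ = ⌊(2:ℝ) ^ l * y⌋ / 2 ^ (l - l').toNat := by
  have key := Int.floor_div_natCast ((2:ℝ) ^ l * y) (2 ^ (l - l').toNat)
  push_cast at key
  rw [← key, ← zpow_natCast, Int.toNat_of_nonneg (by omega), mul_div_right_comm,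
    ← zpow_sub₀ two_ne_zero, sub_sub_cancel]

lemma floor_two_zpow_mul_eq_div_two (l : ℤ) (y : ℝ) :
    ⌊(2:ℝ) ^ l * y⌋ = ⌊(2:ℝ) ^ (l + 1) * y⌋ / 2 := by
  simpa using floor_two_zpow_mul_of_le (Int.le_add_one le_rfl) y

lemma nonneg_of_floor_two_zpow_mul_eq_natCast {l : ℤ} {n : ℕ} {y : ℝ}
    (h : ⌊(2:ℝ) ^ l * y⌋ = n) : 0 ≤ y :=
  nonneg_of_mul_nonneg_right (Int.floor_nonneg.1 (h ▸ n.cast_nonneg)) (by positivity)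

/-- The dyadic interval of length `2^{-l}` containing `x`. -/
def dyadicInterval (l : ℤ) (x : ℝ) : Set ℝ :=
  {y | ⌊(2:ℝ) ^ l * y⌋ = ⌊(2:ℝ) ^ l * x⌋}

def dyadicShell (l : ℤ) (x : ℝ) : Set ℝ := dyadicInterval l x \ dyadicInterval (l + 1) x

section Dyadic

variable {l L : ℤ} {x y : ℝ}

lemma mem_dyadicInterval :
    y ∈ dyadicInterval l x ↔ ⌊(2:ℝ) ^ l * y⌋ = ⌊(2:ℝ) ^ l * x⌋ :=
  Iff.rfl

lemma self_mem_dyadicInterval : x ∈ dyadicInterval l x := rfl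

lemma dyadicInterval_antitone (x : ℝ) : Antitone (dyadicInterval · x) := fun _ _ h _ hy => by
  rw [mem_dyadicInterval, floor_two_zpow_mul_of_le h, floor_two_zpow_mul_of_le h x,
    mem_dyadicInterval.1 hy]

lemma dyadicInterval_eq_Ico (l : ℤ) (x : ℝ) :
    dyadicInterval l x =
      Ico ((⌊(2:ℝ) ^ l * x⌋ : ℝ) * 2 ^ (-l)) ((⌊(2:ℝ) ^ l * x⌋ + 1) * 2 ^ (-l)) := by
  ext y
  exact (mem_Ico_zpow_iff_floor_eq l _ y).symm

lemma measurableSet_dyadicInterval : MeasurableSet (dyadicInterval l x) := by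
  rw [dyadicInterval_eq_Ico]; exact measurableSet_Ico

lemma volume_dyadicInterval : volume (dyadicInterval l x) = ENNReal.ofReal (2 ^ (-l)) := by
  rw [dyadicInterval_eq_Ico, Real.volume_Ico]
  ring_nf

lemma dyadicInterval_subset_Ici (hx : 0 ≤ x) : dyadicInterval l x ⊆ Ici 0 := by
  intro y hy
  rw [dyadicInterval_eq_Ico] at hy
  have : (0:ℝ) ≤ ⌊(2:ℝ) ^ l * x⌋ := by exact_mod_cast Int.floor_nonneg.2 (by positivity)
  exact le_trans (by positivity) hy.1

lemma measurableSet_dyadicShell : MeasurableSet (dyadicShell l x) :=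
  measurableSet_dyadicInterval.diff measurableSet_dyadicInterval

lemma volume_dyadicShell : volume (dyadicShell l x) = ENNReal.ofReal (2 ^ (-(l + 1))) := by
  rw [dyadicShell, measure_sdiff (dyadicInterval_antitone x (Int.le_add_one le_rfl))
      measurableSet_dyadicInterval.nullMeasurableSet
      (by rw [volume_dyadicInterval]; exact ENNReal.ofReal_ne_top),
    volume_dyadicInterval, volume_dyadicInterval, ← ENNReal.ofReal_sub _ (by positivity),
    two_zpow_neg_add_one]
  ring_nf

lemma dyadicShell_subset_Ici (hx : 0 ≤ x) : dyadicShell l x ⊆ Ici 0 :=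
  fun _ hy => dyadicInterval_subset_Ici hx hy.1

lemma self_notMem_dyadicShell : x ∉ dyadicShell l x := fun h => h.2 self_mem_dyadicInterval

lemma le_of_mem_dyadicShell_of_mem_dyadicInterval (hL : y ∈ dyadicShell L x)
    (hl : y ∈ dyadicInterval l x) : l ≤ L := by
  by_contra! h
  exact hL.2 (dyadicInterval_antitone x h hl)

lemma pairwise_disjoint_dyadicShell (x : ℝ) :
    Pairwise (Function.onFun Disjoint (dyadicShell · x)) := by
  refine pairwise_disjoint_on _ |>.2 fun l L hlL => disjoint_left.2 fun y hl hL => ?_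
  exact absurd (le_of_mem_dyadicShell_of_mem_dyadicInterval hl hL.1) (by omega)

/-- `L` is the largest level at which `y` and `x` share a dyadic interval: such levels exist
(both points lie in `[0, 2^N)`) and are bounded above by the scale of `|y - x|`. -/
lemma exists_mem_dyadicShell (hx : 0 ≤ x) (hy : 0 ≤ y) (hyx : y ≠ x) :
    ∃ L, y ∈ dyadicShell L x := by
  have hbdd : ∃ b : ℤ, ∀ l, y ∈ dyadicInterval l x → l ≤ b := by
    have hd : 0 < |y - x| := abs_pos.2 (sub_ne_zero.2 hyx)
    obtain ⟨N, hN⟩ := pow_unbounded_of_one_lt (|y - x|⁻¹) one_lt_two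
    refine ⟨N, fun l hl => ?_⟩
    have h1 := Int.abs_sub_lt_one_of_floor_eq_floor hl
    rw [← mul_sub, abs_mul, abs_of_pos (by positivity)] at h1
    by_contra! h
    have h2 : (2:ℝ) ^ N < 2 ^ l := by
      rw [← zpow_natCast]; exact zpow_lt_zpow_right₀ one_lt_two h
    have h3 := (inv_lt_iff_one_lt_mul₀ hd).1 (hN.trans h2)
    linarith
  have hinh : ∃ l, y ∈ dyadicInterval l x := by
    obtain ⟨N, hN⟩ := pow_unbounded_of_one_lt (max x y) one_lt_two
    have h0 : ∀ z, 0 ≤ z → z ≤ max x y → ⌊(2:ℝ) ^ (-(N:ℤ)) * z⌋ = 0 := fun z hz hzm => by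
      rw [Int.floor_eq_zero_iff, zpow_neg, zpow_natCast]
      exact ⟨by positivity, (inv_mul_lt_one₀ (by positivity)).2 (hzm.trans_lt hN)⟩
    exact ⟨-N, (h0 y hy (le_max_right _ _)).trans (h0 x hx (le_max_left _ _)).symm⟩
  obtain ⟨L, hL, hmax⟩ := Int.exists_greatest_of_bdd hbdd hinh
  exact ⟨L, hL, fun h => by have := hmax _ h; omega⟩

lemma dyadicInterval_diff_singleton (hx : 0 ≤ x) (l : ℤ) :
    dyadicInterval l x \ {x} = ⋃ m : ℕ, dyadicShell (l + m) x := by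
  ext y
  simp only [Set.mem_sdiff, mem_singleton_iff, mem_iUnion]
  constructor
  · rintro ⟨hl, hyx⟩
    obtain ⟨L, hL⟩ := exists_mem_dyadicShell hx (dyadicInterval_subset_Ici hx hl) hyx
    have := le_of_mem_dyadicShell_of_mem_dyadicInterval hL hl
    exact ⟨(L - l).toNat, by rwa [Int.toNat_of_nonneg (by omega), add_sub_cancel]⟩
  · rintro ⟨m, hm⟩
    refine ⟨dyadicInterval_antitone x (by omega) hm.1, ?_⟩
    rintro rfl
    exact self_notMem_dyadicShell hm

lemma Ici_diff_singleton_eq_iUnion_dyadicShell (hx : 0 ≤ x) :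
    Ici 0 \ {x} = ⋃ l : ℤ, dyadicShell l x := by
  ext y
  simp only [Set.mem_sdiff, mem_singleton_iff, mem_iUnion]
  constructor
  · rintro ⟨hy, hyx⟩
    exact exists_mem_dyadicShell hx hy hyx
  · rintro ⟨l, hl⟩
    exact ⟨dyadicShell_subset_Ici hx hl, by rintro rfl; exact self_notMem_dyadicShell hl⟩

lemma Ici_ae_eq_iUnion_dyadicShell (hx : 0 ≤ x) :
    (Ici 0 : Set ℝ) =ᵐ[volume] ⋃ l : ℤ, dyadicShell l x := by
  rw [← Ici_diff_singleton_eq_iUnion_dyadicShell hx]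
  exact (sdiff_null_ae_eq_self (measure_singleton x)).symm

lemma dyadicInterval_ae_eq_iUnion_dyadicShell (hx : 0 ≤ x) (l : ℤ) :
    dyadicInterval l x =ᵐ[volume] ⋃ m : ℕ, dyadicShell (l + m) x := by
  rw [← dyadicInterval_diff_singleton hx]
  exact (sdiff_null_ae_eq_self (measure_singleton x)).symm

lemma dyadicDist_eq_of_mem_dyadicShell (hx : 0 ≤ x) (hy : y ∈ dyadicShell l x) :
    dyadicDist x y = 2 ^ (-l) := by
  have hxy : x ≠ y := by rintro rfl; exact self_notMem_dyadicShell hy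
  have hfx : 0 ≤ ⌊(2:ℝ) ^ l * x⌋ := Int.floor_nonneg.2 (by positivity)
  rw [dyadicDist, if_neg hxy]
  refine IsLeast.csInf_eq ⟨⟨l, ⌊(2:ℝ) ^ l * x⌋.toNat, rfl, ?_⟩, ?_⟩
  · simp only [← Int.cast_natCast (R := ℝ), Int.toNat_of_nonneg hfx, mem_Ico_zpow_iff_floor_eq]
    exact ⟨trivial, hy.1⟩
  · rintro r ⟨j, k, rfl, hxj, hyj⟩
    rw [← Int.cast_natCast (R := ℝ), mem_Ico_zpow_iff_floor_eq] at hxj hyj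
    have := le_of_mem_dyadicShell_of_mem_dyadicInterval hy (hyj.trans hxj.symm)
    exact zpow_le_zpow_right₀ one_le_two (by omega)

lemma mem_dyadicShell_of_floor_eq {j : ℤ} {y' : ℝ} (hy : y ∈ dyadicShell l x)
    (hyj : y ∉ dyadicInterval j x) (hyy' : ⌊(2:ℝ) ^ j * y⌋ = ⌊(2:ℝ) ^ j * y'⌋) :
    y' ∈ dyadicShell l x := by
  have hlj : l + 1 ≤ j := by
    by_contra! h
    exact hyj (dyadicInterval_antitone x (by omega) hy.1)
  have hmem : ∀ i ≤ j, (y' ∈ dyadicInterval i x ↔ y ∈ dyadicInterval i x) := by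
    intro i hi
    simp only [mem_dyadicInterval, floor_two_zpow_mul_of_le hi, hyy']
  exact ⟨(hmem l (by omega)).2 hy.1, fun h => hy.2 ((hmem (l + 1) hlj).1 h)⟩

end Dyadic

def HasDyadicLevels (K : ℝ → ℝ → ℝ) (k : ℤ → ℝ) : Prop :=
  ∀ (j : ℤ) (x y : ℝ), 0 ≤ x → 0 ≤ y → dyadicDist x y = (2:ℝ) ^ j → K x y = k j

lemma LambdaOf_eq_of_hasSum {k : ℤ → ℝ} {j : ℤ} {S : ℝ}
    (h : HasSum (fun m : ℕ => 2 ^ (-(j + 1 + m + 1)) * k (-(j + 1 + m))) S) :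
    LambdaOf k j = S - 2 ^ (-(j + 1)) * k (-j) := by
  set b : ℕ → ℝ := fun m => 2 ^ (-(j + m + 1)) * k (-(j + m))
  have hshift : HasSum (fun m => b (m + 1)) S := h.congr_fun fun m => by
    simp only [b, Nat.cast_add, Nat.cast_one, ← add_assoc, add_right_comm _ (1 : ℤ)]
  have hb : HasSum b (S + b 0) := (hasSum_nat_add_iff' 1).1 (by simpa using hshift)
  have hα : ∀ m : ℕ, alphaOf k (j + 1 + m) = 2 * b (m + 1) - b m := fun m => by
    simp only [alphaOf, b, Nat.cast_add, Nat.cast_one, ← add_assoc, add_right_comm _ (1 : ℤ),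
      two_zpow_neg_add_one, show -(j + m + 1 : ℤ) + 1 = -(j + m) by ring]
    ring
  rw [LambdaOf, (((hshift.mul_left 2).sub hb).congr_fun hα).tsum_eq]
  simp [b]
  ring

namespace HasDyadicLevels

variable {K : ℝ → ℝ → ℝ} {k : ℤ → ℝ} {l : ℤ} {x : ℝ}

lemma eq_of_mem_dyadicShell (hk : HasDyadicLevels K k) (hx : 0 ≤ x) {y : ℝ}
    (hy : y ∈ dyadicShell l x) : K x y = k (-l) :=
  hk _ x y hx (dyadicShell_subset_Ici hx hy) (dyadicDist_eq_of_mem_dyadicShell hx hy)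

lemma eq_of_floor_eq (hk : HasDyadicLevels K k) (hx : 0 ≤ x) {j : ℤ} {y y' : ℝ} (hy : 0 ≤ y)
    (hyx : y ∉ dyadicInterval j x) (hyy' : ⌊(2:ℝ) ^ j * y⌋ = ⌊(2:ℝ) ^ j * y'⌋) :
    K x y = K x y' := by
  obtain ⟨L, hL⟩ := exists_mem_dyadicShell hx hy fun h => hyx (h ▸ self_mem_dyadicInterval)
  rw [hk.eq_of_mem_dyadicShell hx hL,
    hk.eq_of_mem_dyadicShell hx (mem_dyadicShell_of_floor_eq hL hyx hyy')]

lemma setIntegral_dyadicShell (hk : HasDyadicLevels K k) (hx : 0 ≤ x) (g : ℝ → ℝ) :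
    ∫ y in dyadicShell l x, g (K x y) = 2 ^ (-(l + 1)) * g (k (-l)) := by
  rw [setIntegral_congr_fun measurableSet_dyadicShell fun y hy => by
      rw [hk.eq_of_mem_dyadicShell hx hy],
    setIntegral_const, measureReal_def, volume_dyadicShell,
    ENNReal.toReal_ofReal (by positivity), smul_eq_mul]

lemma integrableOn_dyadicShell (hk : HasDyadicLevels K k) (hx : 0 ≤ x) :
    IntegrableOn (K x) (dyadicShell l x) := by
  refine (integrableOn_const (C := k (-l)) ?_).congr_fun
    (fun y hy => (hk.eq_of_mem_dyadicShell hx hy).symm) measurableSet_dyadicShell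
  rw [volume_dyadicShell]
  exact ENNReal.ofReal_ne_top

lemma integrableOn_Ici (hk : HasDyadicLevels K k) {x₀ : ℝ} (hx₀ : 0 ≤ x₀)
    (h₀ : IntegrableOn (K x₀) (Ici 0)) (hx : 0 ≤ x) : IntegrableOn (K x) (Ici 0) := by
  have h₀' := h₀.congr_set_ae (Ici_ae_eq_iUnion_dyadicShell hx₀).symm
  have hsum := (hasSum_integral_iUnion (fun _ => measurableSet_dyadicShell)
    (pairwise_disjoint_dyadicShell x₀) h₀'.norm).summable
  simp only [hk.setIntegral_dyadicShell hx₀ norm] at hsum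
  refine (integrableOn_iUnion_of_summable_integral_norm
    (fun _ => hk.integrableOn_dyadicShell hx) ?_).congr_set_ae (Ici_ae_eq_iUnion_dyadicShell hx)
  simpa only [hk.setIntegral_dyadicShell hx norm] using hsum

lemma hasSum_setIntegral_dyadicInterval (hk : HasDyadicLevels K k) (hx : 0 ≤ x)
    (hint : IntegrableOn (K x) (Ici 0)) (l : ℤ) :
    HasSum (fun m : ℕ => 2 ^ (-(l + m + 1)) * k (-(l + m)))
      (∫ y in dyadicInterval l x, K x y) := by
  rw [setIntegral_congr_set (dyadicInterval_ae_eq_iUnion_dyadicShell hx l)]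
  refine (hasSum_integral_iUnion (s := fun m : ℕ => dyadicShell (l + m) x)
    (fun _ => measurableSet_dyadicShell)
    ((pairwise_disjoint_dyadicShell x).comp_of_injective fun a b h => by simpa using h)
    (hint.mono_set (iUnion_subset fun _ => dyadicShell_subset_Ici hx))).congr_fun fun m => ?_
  exact (hk.setIntegral_dyadicShell hx id).symm

end HasDyadicLevels

noncomputable def haarMother : ℝ → ℝ :=
  (Ico 0 (1 / 2)).indicator 1 - (Ico (1 / 2) 1).indicator 1

lemma integral_haarMother : ∫ t, haarMother t = 0 := by
  have hint : ∀ a b : ℝ, Integrable ((Ico a b).indicator (1 : ℝ → ℝ)) := fun a b =>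
    (integrable_indicator_iff measurableSet_Ico).2 (integrableOn_const measure_Ico_lt_top.ne)
  simp only [haarMother, Pi.sub_apply]
  rw [integral_sub (hint _ _) (hint _ _), integral_indicator_one measurableSet_Ico,
    integral_indicator_one measurableSet_Ico, Real.volume_real_Ico, Real.volume_real_Ico]
  norm_num

section Haar

variable {j : ℤ} {n : ℕ} {x y : ℝ}

lemma haarFn_eq_haarMother (j : ℤ) (n : ℕ) (y : ℝ) :
    haarFn j n y = 2 ^ ((j : ℝ) / 2) * haarMother (2 ^ j * y - n) := by
  rw [haarFn, haarMother, Pi.sub_apply]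
  congr 1
  split_ifs with h1 h2
  · rw [indicator_of_mem h1, indicator_of_notMem fun h => (h.1.trans_lt h1.2).false]; simp
  · rw [indicator_of_notMem h1, indicator_of_mem h2]; simp
  · rw [indicator_of_notMem h1, indicator_of_notMem h2]; simp

lemma integral_haarFn (j : ℤ) (n : ℕ) : ∫ y, haarFn j n y = 0 := by
  simp only [haarFn_eq_haarMother]
  rw [integral_const_mul, Measure.integral_comp_mul_left (fun t => haarMother (t - n)),
    integral_sub_right_eq_self haarMother, integral_haarMother, smul_zero, mul_zero]

lemma haarFn_eq_ite (j : ℤ) (n : ℕ) (y : ℝ) :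
    haarFn j n y = 2 ^ ((j : ℝ) / 2) * (if ⌊(2:ℝ) ^ (j + 1) * y⌋ = 2 * n then 1
      else if ⌊(2:ℝ) ^ (j + 1) * y⌋ = 2 * n + 1 then -1 else 0) := by
  have h2 : (2:ℝ) ^ (j + 1) * y = 2 * ((2:ℝ) ^ j * y) := by
    rw [zpow_add_one₀ two_ne_zero]; ring
  have c1 : (2:ℝ) ^ j * y - n ∈ Ico (0:ℝ) (1 / 2) ↔ ⌊(2:ℝ) ^ (j + 1) * y⌋ = 2 * n := by
    rw [mem_Ico, Int.floor_eq_iff, h2]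
    push_cast
    constructor <;> rintro ⟨_, _⟩ <;> constructor <;> linarith
  have c2 : (2:ℝ) ^ j * y - n ∈ Ico (1 / 2 : ℝ) 1 ↔ ⌊(2:ℝ) ^ (j + 1) * y⌋ = 2 * n + 1 := by
    rw [mem_Ico, Int.floor_eq_iff, h2]
    push_cast
    constructor <;> rintro ⟨_, _⟩ <;> constructor <;> linarith
  simp only [haarFn, c1, c2]

lemma haarFn_eq_zero (h : ⌊(2:ℝ) ^ j * y⌋ ≠ n) : haarFn j n y = 0 := by
  rw [floor_two_zpow_mul_eq_div_two] at h
  rw [haarFn_eq_ite, if_neg (by omega), if_neg (by omega), mul_zero]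

lemma haarFn_eq_zero_of_neg (hy : y < 0) : haarFn j n y = 0 :=
  haarFn_eq_zero fun h => hy.not_ge (nonneg_of_floor_two_zpow_mul_eq_natCast h)

lemma haarFn_of_mem_dyadicInterval_succ (hy : y ∈ dyadicInterval (j + 1) x) :
    haarFn j n y = haarFn j n x := by
  rw [haarFn_eq_ite, haarFn_eq_ite, mem_dyadicInterval.1 hy]

lemma haarFn_of_mem_dyadicShell (hx : ⌊(2:ℝ) ^ j * x⌋ = n) (hy : y ∈ dyadicShell j x) :
    haarFn j n y = -haarFn j n x := by
  have h1 := mem_dyadicInterval.1 hy.1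
  have h2 : ⌊(2:ℝ) ^ (j + 1) * y⌋ ≠ ⌊(2:ℝ) ^ (j + 1) * x⌋ := hy.2
  rw [floor_two_zpow_mul_eq_div_two j y, floor_two_zpow_mul_eq_div_two j x] at h1
  rw [floor_two_zpow_mul_eq_div_two] at hx
  rw [haarFn_eq_ite, haarFn_eq_ite]
  split_ifs <;> first | omega | ring

end Haar

namespace HasDyadicLevels

variable {K : ℝ → ℝ → ℝ} {k : ℤ → ℝ} {j : ℤ} {n : ℕ} {x : ℝ}

lemma integral_mul_haarFn_of_floor_eq (hk : HasDyadicLevels K k) (hx : 0 ≤ x)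
    (hint : IntegrableOn (K x) (Ici 0)) (hxI : ⌊(2:ℝ) ^ j * x⌋ = n) :
    ∫ y in Ici 0, K x y * haarFn j n y = LambdaOf k j * haarFn j n x := by
  have hpt : ∀ y, K x y * haarFn j n y = haarFn j n x *
      ((dyadicInterval (j + 1) x).indicator (K x) y - (dyadicShell j x).indicator (K x) y) := by
    intro y
    by_cases h1 : y ∈ dyadicInterval (j + 1) x
    · rw [indicator_of_mem h1, indicator_of_notMem fun h => h.2 h1,
        haarFn_of_mem_dyadicInterval_succ h1]
      ring
    by_cases h2 : y ∈ dyadicShell j x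
    · rw [indicator_of_notMem h1, indicator_of_mem h2, haarFn_of_mem_dyadicShell hxI h2]
      ring
    · have h3 : ⌊(2:ℝ) ^ j * y⌋ ≠ n := fun h => h2 ⟨h.trans hxI.symm, h1⟩
      rw [indicator_of_notMem h1, indicator_of_notMem h2, haarFn_eq_zero h3]
      ring
  have hshell : ∫ y in dyadicShell j x, K x y = 2 ^ (-(j + 1)) * k (-j) :=
    hk.setIntegral_dyadicShell hx id
  calc ∫ y in Ici 0, K x y * haarFn j n y
      = haarFn j n x * ((∫ y in Ici 0, (dyadicInterval (j + 1) x).indicator (K x) y) -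
          ∫ y in Ici 0, (dyadicShell j x).indicator (K x) y) := by
        simp_rw [hpt]
        rw [integral_const_mul, integral_sub (hint.indicator measurableSet_dyadicInterval)
          (hint.indicator measurableSet_dyadicShell)]
    _ = haarFn j n x * ((∫ y in dyadicInterval (j + 1) x, K x y) -
          ∫ y in dyadicShell j x, K x y) := by
        rw [setIntegral_indicator measurableSet_dyadicInterval,
          setIntegral_indicator measurableSet_dyadicShell,
          inter_eq_right.2 (dyadicInterval_subset_Ici hx),
          inter_eq_right.2 (dyadicShell_subset_Ici hx)]
    _ = LambdaOf k j * haarFn j n x := by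
        rw [LambdaOf_eq_of_hasSum (hk.hasSum_setIntegral_dyadicInterval hx hint (j + 1)), hshell]
        ring

lemma integral_mul_haarFn_of_floor_ne (hk : HasDyadicLevels K k) (hx : 0 ≤ x)
    (hxI : ⌊(2:ℝ) ^ j * x⌋ ≠ n) : ∫ y in Ici 0, K x y * haarFn j n y = 0 := by
  set y₀ : ℝ := n * 2 ^ (-j)
  have hy₀ : ⌊(2:ℝ) ^ j * y₀⌋ = n := by
    rw [mul_left_comm, ← zpow_add₀ two_ne_zero, add_neg_cancel, zpow_zero, mul_one,
      Int.floor_natCast]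
  have hpt : ∀ y, K x y * haarFn j n y = K x y₀ * haarFn j n y := by
    intro y
    by_cases hy : ⌊(2:ℝ) ^ j * y⌋ = n
    · rw [hk.eq_of_floor_eq hx (nonneg_of_floor_two_zpow_mul_eq_natCast hy)
        (fun h => hxI (h.symm.trans hy)) (hy.trans hy₀.symm)]
    · rw [haarFn_eq_zero hy, mul_zero, mul_zero]
  simp_rw [hpt]
  rw [integral_const_mul, setIntegral_eq_integral_of_forall_compl_eq_zero
    fun _ hy => haarFn_eq_zero_of_neg (notMem_Ici.1 hy), integral_haarFn, mul_zero]

end HasDyadicLevels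

theorem haar_eigenfunctions_general (K : ℝ → ℝ → ℝ) (k : ℤ → ℝ)
    (x₀ : ℝ) (hx₀ : 0 ≤ x₀)
    (hKnorm : (∫ y in Set.Ici (0:ℝ), K x₀ y) = 1)
    (hk : ∀ (j : ℤ) (x y : ℝ), 0 ≤ x → 0 ≤ y → dyadicDist x y = (2:ℝ) ^ j → K x y = k j) :
    ∀ (j : ℤ) (n : ℕ) (x : ℝ), 0 ≤ x →
      (∫ y in Set.Ici (0:ℝ), K x y * haarFn j n y) = LambdaOf k j * haarFn j n x := by
  intro j n x hx
  have hK : HasDyadicLevels K k := hk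
  have h₀ : IntegrableOn (K x₀) (Ici 0) :=
    Integrable.of_integral_ne_zero (by rw [hKnorm]; exact one_ne_zero)
  have hint : IntegrableOn (K x) (Ici 0) := hK.integrableOn_Ici hx₀ h₀ hx
  by_cases hxI : ⌊(2:ℝ) ^ j * x⌋ = n
  · exact hK.integral_mul_haarFn_of_floor_eq hx hint hxI
  · rw [haarFn_eq_zero hxI, mul_zero]
    exact hK.integral_mul_haarFn_of_floor_ne hx hxI

/-- Theorem 3: the Haar functions are eigenfunctions of the operator
`Tf(x) = ∫ K(x,y) f(y) dy` associated with a kernel `K ∈ 𝒦`, with eigenvalues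
`Λ_{j(h)}`: for every Haar function `h = h^j_k`, `Th(x) = Λ_j h(x)` for all `x ∈ ℝ⁺`. -/
theorem haar_eigenfunctions (K : ℝ → ℝ → ℝ) (k : ℤ → ℝ)
    (hK0 : ∀ x y : ℝ, 0 ≤ x → 0 ≤ y → 0 ≤ K x y)
    (hKdist : ∀ x y x' y' : ℝ, 0 ≤ x → 0 ≤ y → 0 ≤ x' → 0 ≤ y' →
      dyadicDist x y = dyadicDist x' y' → K x y = K x' y')
    (x₀ : ℝ) (hx₀ : 0 ≤ x₀)
    (hKnorm : (∫ y in Set.Ici (0:ℝ), K x₀ y) = 1)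
    (hk : ∀ (j : ℤ) (x y : ℝ), 0 ≤ x → 0 ≤ y → dyadicDist x y = (2:ℝ) ^ j → K x y = k j) :
    ∀ (j : ℤ) (n : ℕ) (x : ℝ), 0 ≤ x →
      (∫ y in Set.Ici (0:ℝ), K x y * haarFn j n y) = LambdaOf k j * haarFn j n x :=
  haar_eigenfunctions_general K k x₀ hx₀ hKnorm hk
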